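/- arXiv:1810.02177 — 3 statements merged into one kernel-verified Lean document; each statement's English description precedes it below -/
import Mathlib

section
/- Let $H \in (0, 3/4)$. Then $\lim_{T \to \infty} \frac{1}{T e^{3T}} \int_{[0,T]^3} e^{s_1 + t + s_2} \, H\big(t^{2H-1} + (T-t)^{2H-1}\big) \, H\big(s_1^{2H-1} - \mathrm{sgn}(s_1 - s_2)|s_1 - s_2|^{2H-1}\big) \, dt \, ds_1 \, ds_2 = 0$. -/
/-!
With `c = 2H - 1 ∈ (-1, 1/2)` the integrand factorizes, so the triple integral is
`H ∫₀ᵀ eᵗ (t^c + (T - t)^c) dt` times a double integral over `(s₁, s₂) ∈ [0, T]²`. In the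
latter the term `sgn(s₁ - s₂) |s₁ - s₂|^c` is antisymmetric while the weight `e^{s₁ + s₂}` is
symmetric, so by Fubini it integrates to zero and the double integral equals
`H (e^T - 1) ∫₀ᵀ eˢ s^c ds`. Splitting at `T / 2` gives
`∫₀ᵀ eᵗ t^c dt = O(e^{T/2} T^{c+1} + e^T T^c)`, and `∫₀ᵀ eᵗ (T - t)^c dt ≤ e^T Γ(c + 1)`;
both are `o(e^T √T)` because `c < 1/2`, so the product is `o(T e^{3T})`.
-/

open MeasureTheory Real Filter
open Set Asymptotics

theorem Real.measurable_sign : Measurable Real.sign := by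
  unfold Real.sign
  exact Measurable.ite measurableSet_Iio measurable_const
    (Measurable.ite measurableSet_Ioi measurable_const measurable_const)

theorem integral_integral_eq_zero_of_antisymm {α E : Type*} [MeasurableSpace α]
    [NormedAddCommGroup E] [NormedSpace ℝ E] {μ : Measure α} [SFinite μ] {f : α → α → E}
    (hf : Integrable (Function.uncurry f) (μ.prod μ)) (h_antisymm : ∀ x y, f y x = -f x y) :
    ∫ x, ∫ y, f x y ∂μ ∂μ = 0 := by
  have h_swap : ∫ x, ∫ y, f x y ∂μ ∂μ = -∫ x, ∫ y, f x y ∂μ ∂μ := by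
    calc ∫ x, ∫ y, f x y ∂μ ∂μ = ∫ y, ∫ x, f x y ∂μ ∂μ := integral_integral_swap hf
      _ = ∫ y, ∫ x, -f y x ∂μ ∂μ := by
        refine integral_congr_ae (ae_of_all _ fun y => integral_congr_ae (ae_of_all _ fun x => ?_))
        exact h_antisymm y x
      _ = -∫ x, ∫ y, f x y ∂μ ∂μ := by simp only [integral_neg]
  have h_two : (2 : ℝ) • ∫ x, ∫ y, f x y ∂μ ∂μ = 0 := by
    rw [two_smul]
    nth_rw 2 [h_swap]
    exact add_neg_cancel _
  exact (smul_eq_zero.1 h_two).resolve_left two_ne_zero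

theorem intervalIntegral.integral_integral_integral_mul (f : ℝ → ℝ) (g : ℝ → ℝ → ℝ) (a b : ℝ) :
    ∫ t in a..b, ∫ x in a..b, ∫ y in a..b, f t * g x y
      = (∫ t in a..b, f t) * ∫ x in a..b, ∫ y in a..b, g x y := by
  simp only [intervalIntegral.integral_const_mul, intervalIntegral.integral_mul_const]

theorem isLittleO_rpow_rpow_atTop {a b : ℝ} (hab : a < b) :
    (fun x : ℝ => x ^ a) =o[atTop] fun x => x ^ b := by
  have h_lim : Tendsto (fun x : ℝ => x ^ (a - b)) atTop (nhds 0) := by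
    simpa using tendsto_rpow_neg_atTop (sub_pos.2 hab)
  refine (((isLittleO_one_iff ℝ).2 h_lim).mul_isBigO
    (isBigO_refl (fun x : ℝ => x ^ b) atTop)).congr' ?_ (by simp)
  filter_upwards [eventually_gt_atTop 0] with x hx
  rw [← rpow_add hx, sub_add_cancel]

theorem exp_isLittleO_exp_mul_sqrt : exp =o[atTop] fun T => exp T * √T := by
  have h_one : (fun _ : ℝ => (1 : ℝ)) =o[atTop] fun T => √T := by
    simpa [sqrt_eq_rpow] using isLittleO_rpow_rpow_atTop (show (0 : ℝ) < 1 / 2 by norm_num)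
  simpa using (isBigO_refl exp atTop).mul_isLittleO h_one

theorem isBigO_exp_sub_one_exp_atTop : (fun T => exp T - 1) =O[atTop] exp := by
  refine IsBigO.of_bound' ?_
  filter_upwards [eventually_ge_atTop 0] with T hT
  rw [norm_of_nonneg (sub_nonneg.2 (one_le_exp hT)), norm_of_nonneg (exp_nonneg T)]
  linarith

section
variable {c : ℝ}

theorem intervalIntegrable_abs_rpow (hc : -1 < c) (a b : ℝ) :
    IntervalIntegrable (fun x => |x| ^ c) volume a b := by
  have of_nonneg : ∀ b, 0 ≤ b → IntervalIntegrable (fun x => |x| ^ c) volume 0 b := fun b hb =>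
    (intervalIntegral.intervalIntegrable_rpow' hc).congr fun x hx => by
      rw [uIoc_of_le hb] at hx
      simp [abs_of_pos hx.1]
  have from_zero : ∀ b, IntervalIntegrable (fun x => |x| ^ c) volume 0 b := by
    intro b
    rcases le_total 0 b with hb | hb
    · exact of_nonneg b hb
    · simpa using (of_nonneg (-b) (neg_nonneg.2 hb)).comp_sub_left 0
  exact (from_zero a).symm.trans (from_zero b)

theorem integrable_abs_sub_rpow_Ioc_prod (hc : -1 < c) (a b : ℝ) :
    Integrable (fun p : ℝ × ℝ => |p.1 - p.2| ^ c)
      ((volume.restrict (Ioc a b)).prod (volume.restrict (Ioc a b))) := by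
  have h_one : Integrable ((Ioc a b).indicator fun _ => (1 : ℝ)) :=
    (integrable_indicator_iff measurableSet_Ioc).2 (integrableOn_const measure_Ioc_lt_top.ne)
  have h_kernel : Integrable ((uIoc (a - b) (b - a)).indicator fun x => |x| ^ c) :=
    (integrable_indicator_iff measurableSet_uIoc).2 (intervalIntegrable_abs_rpow hc _ _).def'
  -- on the square, `|x - y| ^ c` equals the convolution integrand of `h_one` and `h_kernel`
  have h_conv := h_one.convolution_integrand (ContinuousLinearMap.mul ℝ ℝ) h_kernel
  rw [Measure.prod_restrict, ← Measure.volume_eq_prod]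
  rw [← Measure.volume_eq_prod] at h_conv
  refine h_conv.integrableOn.congr_fun (fun p ⟨⟨h1, h1'⟩, ⟨h2, h2'⟩⟩ => ?_)
    (measurableSet_Ioc.prod measurableSet_Ioc)
  have : p.1 - p.2 ∈ uIoc (a - b) (b - a) := by
    rw [uIoc_of_le (by linarith)]; constructor <;> linarith
  simp [indicator_of_mem (show p.2 ∈ Ioc a b from ⟨h2, h2'⟩), indicator_of_mem this]

theorem integrable_exp_add_mul_sign_mul_abs_sub_rpow (hc : -1 < c) (T : ℝ) :
    Integrable (fun p : ℝ × ℝ => exp (p.1 + p.2) * (Real.sign (p.1 - p.2) * |p.1 - p.2| ^ c))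
      ((volume.restrict (Ioc 0 T)).prod (volume.restrict (Ioc 0 T))) := by
  simp_rw [← mul_assoc]
  refine (integrable_abs_sub_rpow_Ioc_prod hc 0 T).bdd_mul (c := exp (T + T)) ?_ ?_
  · exact (by fun_prop : Measurable fun p : ℝ × ℝ => exp (p.1 + p.2)).mul
      (Real.measurable_sign.comp (by fun_prop)) |>.aestronglyMeasurable
  · rw [Measure.prod_restrict]
    filter_upwards [ae_restrict_mem (measurableSet_Ioc.prod measurableSet_Ioc)]
      with p ⟨⟨_, h1⟩, ⟨_, h2⟩⟩
    rw [norm_mul, norm_of_nonneg (exp_nonneg _)]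
    calc exp (p.1 + p.2) * ‖Real.sign (p.1 - p.2)‖ ≤ exp (T + T) * 1 := by
          gcongr
          rcases Real.sign_apply_eq (p.1 - p.2) with h | h | h <;> simp [h]
      _ = exp (T + T) := mul_one _

theorem intervalIntegrable_exp_mul_rpow (hc : -1 < c) (a b : ℝ) :
    IntervalIntegrable (fun t => exp t * t ^ c) volume a b :=
  (intervalIntegral.intervalIntegrable_rpow' hc).continuousOn_mul continuous_exp.continuousOn

theorem intervalIntegrable_exp_mul_sub_rpow (hc : -1 < c) (T a b : ℝ) :
    IntervalIntegrable (fun t => exp t * (T - t) ^ c) volume a b := by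
  have h := (intervalIntegral.intervalIntegrable_rpow' hc (a := T - a) (b := T - b)).comp_sub_left T
  simp only [sub_sub_cancel] at h
  exact h.continuousOn_mul continuous_exp.continuousOn

theorem integral_integral_exp_add_mul_rpow_sub_sign_mul (hc : -1 < c) {T : ℝ} (hT : 0 ≤ T) (a : ℝ) :
    ∫ s1 in (0:ℝ)..T, ∫ s2 in (0:ℝ)..T,
        exp (s1 + s2) * (a * (s1 ^ c - Real.sign (s1 - s2) * |s1 - s2| ^ c))
      = a * (∫ s in (0:ℝ)..T, exp s * s ^ c) * (exp T - 1) := by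
  have h_exp : ∫ s in Ioc 0 T, exp s = exp T - 1 := by
    rw [← intervalIntegral.integral_of_le hT, integral_exp, exp_zero]
  simp_rw [intervalIntegral.integral_of_le hT]
  set μ := volume.restrict (Ioc (0:ℝ) T)
  have h_sym : Integrable (fun p : ℝ × ℝ => a * (exp p.1 * p.1 ^ c) * exp p.2) (μ.prod μ) :=
    (((intervalIntegrable_iff_integrableOn_Ioc_of_le hT).1
      (intervalIntegrable_exp_mul_rpow hc 0 T)).const_mul a).mul_prod
      (continuous_exp.integrableOn_Icc.mono_set Ioc_subset_Icc_self)
  have h_anti := (integrable_exp_add_mul_sign_mul_abs_sub_rpow hc T).const_mul a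
  have h_zero : ∫ x, ∫ y, a * (exp (x + y) * (Real.sign (x - y) * |x - y| ^ c)) ∂μ ∂μ = 0 :=
    integral_integral_eq_zero_of_antisymm h_anti fun x y => by
      rw [add_comm, abs_sub_comm, ← neg_sub x y, Real.sign_neg]
      ring
  calc ∫ x, ∫ y, exp (x + y) * (a * (x ^ c - Real.sign (x - y) * |x - y| ^ c)) ∂μ ∂μ
      = ∫ x, ∫ y, a * (exp x * x ^ c) * exp y
          - a * (exp (x + y) * (Real.sign (x - y) * |x - y| ^ c)) ∂μ ∂μ := by
        refine integral_congr_ae (ae_of_all _ fun x => integral_congr_ae (ae_of_all _ fun y => ?_))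
        simp only [exp_add]
        ring
    _ = (∫ x, ∫ y, a * (exp x * x ^ c) * exp y ∂μ ∂μ)
          - ∫ x, ∫ y, a * (exp (x + y) * (Real.sign (x - y) * |x - y| ^ c)) ∂μ ∂μ :=
        integral_integral_sub h_sym h_anti
    _ = a * (∫ s in Ioc 0 T, exp s * s ^ c) * (exp T - 1) := by
        rw [h_zero, sub_zero]
        simp only [integral_const_mul, integral_mul_const, h_exp]
        rfl

theorem integral_exp_mul_rpow_add_sub_rpow (hc : -1 < c) (T a : ℝ) :
    ∫ t in (0:ℝ)..T, exp t * (a * (t ^ c + (T - t) ^ c))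
      = a * ((∫ t in (0:ℝ)..T, exp t * t ^ c) + ∫ t in (0:ℝ)..T, exp t * (T - t) ^ c) := by
  rw [← intervalIntegral.integral_add (intervalIntegrable_exp_mul_rpow hc 0 T)
    (intervalIntegrable_exp_mul_sub_rpow hc T 0 T), ← intervalIntegral.integral_const_mul]
  congr 1 with t
  ring

theorem integral_exp_neg_mul_rpow_le_Gamma (hc : -1 < c) {L : ℝ} (hL : 0 ≤ L) :
    ∫ u in (0:ℝ)..L, exp (-u) * u ^ c ≤ Gamma (c + 1) := by
  have h_int : IntegrableOn (fun u => exp (-u) * u ^ c) (Ioi 0) := by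
    simpa using GammaIntegral_convergent (s := c + 1) (by linarith)
  rw [Gamma_eq_integral (by linarith), intervalIntegral.integral_of_le hL, add_sub_cancel_right]
  refine setIntegral_mono_set h_int ?_ (ae_of_all _ Ioc_subset_Ioi_self)
  filter_upwards [ae_restrict_mem measurableSet_Ioi] with u hu
  exact mul_nonneg (exp_nonneg _) (rpow_nonneg (le_of_lt hu) _)

theorem integral_exp_mul_sub_rpow_le (hc : -1 < c) {T : ℝ} (hT : 0 ≤ T) :
    ∫ t in (0:ℝ)..T, exp t * (T - t) ^ c ≤ exp T * Gamma (c + 1) := by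
  calc ∫ t in (0:ℝ)..T, exp t * (T - t) ^ c
      = exp T * ∫ t in (0:ℝ)..T, exp (-(T - t)) * (T - t) ^ c := by
        rw [← intervalIntegral.integral_const_mul]
        congr 1 with t
        rw [← mul_assoc, ← exp_add]
        ring_nf
    _ = exp T * ∫ u in (0:ℝ)..T, exp (-u) * u ^ c := by
        rw [intervalIntegral.integral_comp_sub_left (fun u => exp (-u) * u ^ c), sub_self, sub_zero]
    _ ≤ exp T * Gamma (c + 1) :=
        mul_le_mul_of_nonneg_left (integral_exp_neg_mul_rpow_le_Gamma hc hT) (exp_nonneg T)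

theorem integral_exp_mul_rpow_le (hc : -1 < c) {a : ℝ} (ha : 0 ≤ a) :
    ∫ t in (0:ℝ)..a, exp t * t ^ c ≤ exp a * (a ^ (c + 1) / (c + 1)) := by
  calc ∫ t in (0:ℝ)..a, exp t * t ^ c ≤ ∫ t in (0:ℝ)..a, exp a * t ^ c := by
        refine intervalIntegral.integral_mono_on ha (intervalIntegrable_exp_mul_rpow hc 0 a)
          ((intervalIntegral.intervalIntegrable_rpow' hc).const_mul _) fun t ht => ?_
        exact mul_le_mul_of_nonneg_right (exp_le_exp.2 ht.2) (rpow_nonneg ht.1 c)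
    _ = exp a * (a ^ (c + 1) / (c + 1)) := by
        rw [intervalIntegral.integral_const_mul, integral_rpow (Or.inl hc),
          zero_rpow (by linarith), sub_zero]

theorem rpow_le_two_mul_rpow (hc : -1 ≤ c) {t T : ℝ} (ht : 0 < t) (htT : t ≤ T) (hTt : T ≤ 2 * t) :
    t ^ c ≤ 2 * T ^ c := by
  have hT : 0 < T := ht.trans_le htT
  rcases le_or_gt 0 c with hc0 | hc0
  · linarith [rpow_le_rpow ht.le htT hc0, rpow_nonneg hT.le c]
  · have h_two : (2 : ℝ)⁻¹ ≤ 2 ^ c := by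
      simpa [rpow_neg_one] using rpow_le_rpow_of_exponent_le one_le_two hc
    calc t ^ c ≤ (T / 2) ^ c := rpow_le_rpow_of_nonpos (by positivity) (by linarith) hc0.le
      _ = T ^ c / 2 ^ c := div_rpow hT.le zero_le_two c
      _ ≤ 2 * T ^ c := by
        rw [div_le_iff₀ (by positivity)]
        nlinarith [rpow_pos_of_pos hT c]

theorem integral_exp_mul_rpow_le_exp_half_add (hc : -1 < c) {T : ℝ} (hT : 0 < T) :
    ∫ t in (0:ℝ)..T, exp t * t ^ c
      ≤ exp (T / 2) * (T ^ (c + 1) / (c + 1)) + 2 * (exp T * T ^ c) := by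
  have h_int := intervalIntegrable_exp_mul_rpow hc
  rw [← intervalIntegral.integral_add_adjacent_intervals (h_int 0 (T / 2)) (h_int (T / 2) T)]
  gcongr ?_ + ?_
  · calc ∫ t in (0:ℝ)..T / 2, exp t * t ^ c ≤ exp (T / 2) * ((T / 2) ^ (c + 1) / (c + 1)) :=
          integral_exp_mul_rpow_le hc (by positivity)
      _ ≤ exp (T / 2) * (T ^ (c + 1) / (c + 1)) := by
          gcongr <;> linarith
  · calc ∫ t in T / 2..T, exp t * t ^ c ≤ ∫ t in T / 2..T, exp t * (2 * T ^ c) := by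
          refine intervalIntegral.integral_mono_on (by linarith) (h_int _ _)
            (continuous_exp.intervalIntegrable _ _ |>.mul_const _) fun t ht => ?_
          have := rpow_le_two_mul_rpow hc.le (by linarith [ht.1]) ht.2 (by linarith [ht.1])
          exact mul_le_mul_of_nonneg_left this (exp_nonneg t)
      _ = (exp T - exp (T / 2)) * (2 * T ^ c) := by
          rw [intervalIntegral.integral_mul_const, integral_exp]
      _ ≤ 2 * (exp T * T ^ c) := by
          nlinarith [rpow_nonneg hT.le c, exp_pos (T / 2)]

theorem integral_exp_mul_sub_rpow_isLittleO (hc : -1 < c) :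
    (fun T => ∫ t in (0:ℝ)..T, exp t * (T - t) ^ c) =o[atTop] fun T => exp T * √T := by
  refine IsBigO.trans_isLittleO ?_ exp_isLittleO_exp_mul_sqrt
  refine IsBigO.of_bound (Gamma (c + 1)) ?_
  filter_upwards [eventually_ge_atTop 0] with T hT
  have h_nonneg : 0 ≤ ∫ t in (0:ℝ)..T, exp t * (T - t) ^ c :=
    intervalIntegral.integral_nonneg hT fun t ht =>
      mul_nonneg (exp_nonneg t) (rpow_nonneg (by linarith [ht.2]) c)
  rw [norm_of_nonneg h_nonneg, norm_of_nonneg (exp_nonneg T), mul_comm]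
  exact integral_exp_mul_sub_rpow_le hc hT

theorem integral_exp_mul_rpow_isLittleO (hc : -1 < c) (hc' : c < 1 / 2) :
    (fun T => ∫ t in (0:ℝ)..T, exp t * t ^ c) =o[atTop] fun T => exp T * √T := by
  have h_head : (fun T => exp (T / 2) * (T ^ (c + 1) / (c + 1))) =o[atTop] exp := by
    refine ((isLittleO_exp_mul_rpow_of_lt (c + 1) (show (1 / 2 : ℝ) < 1 by norm_num)).const_mul_left
      (c + 1)⁻¹).congr (fun T => ?_) (fun T => by simp)
    ring_nf
  have h_tail : (fun T => 2 * (exp T * T ^ c)) =o[atTop] fun T => exp T * √T := by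
    have h_rpow : (fun T : ℝ => T ^ c) =o[atTop] fun T => √T := by
      simpa [sqrt_eq_rpow] using isLittleO_rpow_rpow_atTop hc'
    exact ((isBigO_refl exp atTop).mul_isLittleO h_rpow).const_mul_left 2
  refine IsBigO.trans_isLittleO ?_ ((h_head.trans exp_isLittleO_exp_mul_sqrt).add h_tail)
  refine IsBigO.of_bound' ?_
  filter_upwards [eventually_gt_atTop 0] with T hT
  have h_nonneg : 0 ≤ ∫ t in (0:ℝ)..T, exp t * t ^ c :=
    intervalIntegral.integral_nonneg hT.le fun t ht =>
      mul_nonneg (exp_nonneg t) (rpow_nonneg ht.1 c)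
  rw [norm_of_nonneg h_nonneg]
  exact (integral_exp_mul_rpow_le_exp_half_add hc hT).trans (le_abs_self _)

end

theorem stmt_6 (H : ℝ) (hH : H ∈ Set.Ioo (0:ℝ) (3/4)) :
    Tendsto (fun T : ℝ =>
        (1 / (T * Real.exp (3 * T))) *
          ∫ t in (0:ℝ)..T, ∫ s1 in (0:ℝ)..T, ∫ s2 in (0:ℝ)..T,
            Real.exp (s1 + t + s2) *
              (H * (t ^ (2 * H - 1) + (T - t) ^ (2 * H - 1))) *
              (H * (s1 ^ (2 * H - 1) - Real.sign (s1 - s2) * |s1 - s2| ^ (2 * H - 1))))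
      atTop (nhds 0) := by
  obtain ⟨hH0, hH34⟩ := hH
  have hc : -1 < 2 * H - 1 := by linarith
  have hP := integral_exp_mul_rpow_isLittleO hc (by linarith)
  have hQ := integral_exp_mul_sub_rpow_isLittleO hc
  simp only [one_div_mul_eq_div]
  refine IsLittleO.tendsto_div_nhds_zero <| (((hP.add hQ).const_mul_left H).mul
    ((hP.const_mul_left H).mul_isBigO isBigO_exp_sub_one_exp_atTop)).congr' ?_ ?_
  · filter_upwards [eventually_ge_atTop 0] with T hT
    rw [← integral_exp_mul_rpow_add_sub_rpow hc,
      ← integral_integral_exp_add_mul_rpow_sub_sign_mul hc hT,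
      ← intervalIntegral.integral_integral_integral_mul]
    refine intervalIntegral.integral_congr fun t _ => intervalIntegral.integral_congr fun s1 _ =>
      intervalIntegral.integral_congr fun s2 _ => ?_
    simp only [exp_add]
    ring
  · filter_upwards [eventually_ge_atTop 0] with T hT
    have h_exp3 : exp (3 * T) = exp T * exp T * exp T := by
      rw [← exp_add, ← exp_add]; ring_nf
    rw [h_exp3]
    linear_combination (exp T * exp T * exp T) * mul_self_sqrt hT
end

section
/- Let $H \in (0, 1/2)$ and $\epsilon \in (0, 1/4)$. For $T > 0$ and $x \in [0,T]$ define $\varphi_2(x) := \int_x^T \big( (t-x)^{2H-1} - t^{2H-1} \big) (T-t+x)^{2H-1} dt$. Then there exists a constant $c > 0$ such that for all sufficiently large $T$, $0 < \int_0^{T\epsilon} e^{-x} \varphi_2(x) \, dx \leq c \, T^{2H-1}$. -/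
/-!
Write `p = 2H - 1 ∈ (-1, 0)`. The integrand of `φ₂(x)` is positive on `(x, T)`, whence
positivity. For `0 < x ≤ T/4` split `φ₂(x)` at `T/2`. On `[x, T/2]` the weight `(T - t + x)^p`
is at most `(T/2)^p`, and `∫ ((t - x)^p - t^p) ≤ x^(p+1)/(p+1)`. On `[T/2, T]` the tangent line
of the convex `u^p` at `t - x ≥ T/4 ≥ x` gives `(t - x)^p - t^p ≤ 4|p| x^(p+1)/T`, and
the weight integrates to at most `T^(p+1)/(p+1)`. Hence `φ₂(x) ≤ C T^p x^(p+1)`, and the claim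
follows from `∫₀^{Tε} e^{-x} x^(p+1) dx ≤ Γ(p+2)`.
-/

open MeasureTheory Real Filter Set intervalIntegral

lemma intervalIntegrable_sub_rpow {p : ℝ} (hp : -1 < p) (x a b : ℝ) :
    IntervalIntegrable (fun t : ℝ => (t - x) ^ p) volume a b := by
  simpa using (intervalIntegrable_rpow' (a := a - x) (b := b - x) hp).comp_sub_right x

lemma intervalIntegrable_sub_rpow_sub_rpow {p : ℝ} (hp : -1 < p) (x a b : ℝ) :
    IntervalIntegrable (fun t : ℝ => (t - x) ^ p - t ^ p) volume a b :=
  (intervalIntegrable_sub_rpow hp x a b).sub (intervalIntegrable_rpow' hp)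

lemma integral_sub_rpow_sub_rpow_le {p x b : ℝ} (hp : -1 < p) (hx : 0 ≤ x) (hxb : x ≤ b) :
    ∫ t in x..b, ((t - x) ^ p - t ^ p) ≤ x ^ (p + 1) / (p + 1) := by
  have hp' : 0 < p + 1 := by linarith
  have hmono : (b - x) ^ (p + 1) ≤ b ^ (p + 1) := rpow_le_rpow (by linarith) (by linarith) hp'.le
  rw [integral_sub (intervalIntegrable_sub_rpow hp x x b) (intervalIntegrable_rpow' hp),
    integral_comp_sub_right (fun u => u ^ p), sub_self, integral_rpow (Or.inl hp),
    integral_rpow (Or.inl hp), zero_rpow hp'.ne']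
  have hsplit : ((b - x) ^ (p + 1) - 0) / (p + 1) - (b ^ (p + 1) - x ^ (p + 1)) / (p + 1)
      = x ^ (p + 1) / (p + 1) - (b ^ (p + 1) - (b - x) ^ (p + 1)) / (p + 1) := by ring
  rw [hsplit]
  exact sub_le_self _ (div_nonneg (sub_nonneg.2 hmono) hp'.le)

/-- Tangent-line inequality for the convex function `u ↦ u ^ p`, `p < 0`. -/
lemma rpow_sub_rpow_add_le {p a x : ℝ} (hp : p < 0) (ha : 0 < a) (hx : 0 ≤ x) :
    a ^ p - (a + x) ^ p ≤ -p * a ^ (p - 1) * x := by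
  have hderiv : ∀ u ∈ Ici a, HasDerivAt (fun u : ℝ => -u ^ p) (-(p * u ^ (p - 1))) u :=
    fun u hu => (hasDerivAt_rpow_const (Or.inl (ha.trans_le hu).ne')).neg
  have key := (convex_Ici a).image_sub_le_mul_sub_of_deriv_le
    (fun u hu => (hderiv u hu).continuousAt.continuousWithinAt)
    (fun u hu => (hderiv u (interior_subset hu)).differentiableAt.differentiableWithinAt)
    (C := -p * a ^ (p - 1)) (fun u hu => by
      rw [interior_Ici] at hu
      rw [(hderiv u (mem_Ici.2 hu.le)).deriv, ← neg_mul]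
      exact mul_le_mul_of_nonneg_left (rpow_le_rpow_of_nonpos ha hu.le (by linarith))
        (by linarith))
    a self_mem_Ici (a + x) (by simpa using hx) (by linarith)
  rw [add_sub_cancel_left] at key
  linarith

lemma rpow_sub_rpow_add_le_of_le {p a x : ℝ} (hp : p < 0) (hx : 0 < x) (hxa : x ≤ a) :
    a ^ p - (a + x) ^ p ≤ -p * x ^ (p + 1) / a := by
  have ha : 0 < a := hx.trans_le hxa
  have hpx : 0 ≤ -p * x := mul_nonneg (by linarith) hx.le
  calc a ^ p - (a + x) ^ p ≤ -p * a ^ (p - 1) * x := rpow_sub_rpow_add_le hp ha hx.le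
    _ = -p * x * a ^ p / a := by rw [rpow_sub_one ha.ne']; ring
    _ ≤ -p * x * x ^ p / a :=
      div_le_div_of_nonneg_right
        (mul_le_mul_of_nonneg_left (rpow_le_rpow_of_nonpos hx hxa hp.le) hpx) ha.le
    _ = -p * x ^ (p + 1) / a := by rw [rpow_add_one hx.ne']; ring

lemma continuous_exp_neg_mul_rpow {s : ℝ} (hs : 0 ≤ s) :
    Continuous fun x : ℝ => exp (-x) * x ^ s :=
  continuous_neg.rexp.mul (continuous_rpow_const hs)

lemma integral_exp_neg_mul_rpow_le_Gamma_s12 {s a : ℝ} (hs : -1 < s) (ha : 0 ≤ a) :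
    ∫ x in (0:ℝ)..a, exp (-x) * x ^ s ≤ Gamma (s + 1) := by
  have hconv := GammaIntegral_convergent (s := s + 1) (by linarith)
  rw [add_sub_cancel_right] at hconv
  rw [Gamma_eq_integral (by linarith), add_sub_cancel_right, integral_of_le ha]
  refine setIntegral_mono_set hconv ?_ Ioc_subset_Ioi_self.eventuallyLE
  filter_upwards [self_mem_ae_restrict measurableSet_Ioi] with x hx
  exact mul_nonneg (exp_pos _).le (rpow_nonneg (le_of_lt hx) _)

lemma stronglyMeasurable_intervalIntegral_param {f : ℝ → ℝ → ℝ}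
    (hf : Measurable (Function.uncurry f)) (b : ℝ) :
    StronglyMeasurable fun x => ∫ t in x..b, f x t := by
  have hmeas {s : Set (ℝ × ℝ)} (hs : MeasurableSet s) :
      StronglyMeasurable fun x => ∫ t, s.indicator (Function.uncurry f) (x, t) :=
    (hf.indicator hs).stronglyMeasurable.integral_prod_right'
  have hfwd : MeasurableSet {q : ℝ × ℝ | q.1 < q.2 ∧ q.2 ≤ b} :=
    (measurableSet_lt measurable_fst measurable_snd).inter
      (measurableSet_le measurable_snd measurable_const)
  have hbwd : MeasurableSet {q : ℝ × ℝ | b < q.2 ∧ q.2 ≤ q.1} :=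
    (measurableSet_lt measurable_const measurable_snd).inter
      (measurableSet_le measurable_snd measurable_fst)
  convert (hmeas hfwd).sub (hmeas hbwd) using 2 with x
  simp only [intervalIntegral, ← MeasureTheory.integral_indicator measurableSet_Ioc]
  rfl

noncomputable def phiTwo (p T x : ℝ) : ℝ :=
  ∫ t in x..T, ((t - x) ^ p - t ^ p) * (T - t + x) ^ p

lemma continuousOn_rpow_sub_add (p T x : ℝ) (hx : 0 < x) :
    ContinuousOn (fun t : ℝ => (T - t + x) ^ p) (Iic T) :=
  ContinuousOn.rpow_const (f := fun t : ℝ => T - t + x) (by fun_prop)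
    fun t ht => Or.inl (by linarith [show t ≤ T from ht])

lemma intervalIntegrable_phiTwo_integrand {p T x a b : ℝ} (hp : -1 < p) (hx : 0 < x)
    (ha : a ≤ T) (hb : b ≤ T) :
    IntervalIntegrable (fun t : ℝ => ((t - x) ^ p - t ^ p) * (T - t + x) ^ p) volume a b :=
  (intervalIntegrable_sub_rpow_sub_rpow hp x a b).mul_continuousOn
    ((continuousOn_rpow_sub_add p T x hx).mono fun _ ht => ht.2.trans (max_le ha hb))

lemma phiTwo_pos {p T x : ℝ} (hp1 : -1 < p) (hp0 : p < 0) (hx : 0 < x) (hxT : x < T) :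
    0 < phiTwo p T x :=
  intervalIntegral_pos_of_pos_on (intervalIntegrable_phiTwo_integrand hp1 hx hxT.le le_rfl)
    (fun t ht => mul_pos (sub_pos.2 (rpow_lt_rpow_of_neg (sub_pos.2 ht.1) (by linarith) hp0))
      (rpow_pos_of_pos (by linarith [ht.2]) p)) hxT

lemma integral_phiTwo_integrand_left_le {p T x : ℝ} (hp1 : -1 < p) (hp0 : p < 0) (hx : 0 < x)
    (hxT : x ≤ T / 2) :
    ∫ t in x..T / 2, ((t - x) ^ p - t ^ p) * (T - t + x) ^ p
      ≤ x ^ (p + 1) / (p + 1) * (T / 2) ^ p := by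
  calc ∫ t in x..T / 2, ((t - x) ^ p - t ^ p) * (T - t + x) ^ p
      ≤ ∫ t in x..T / 2, ((t - x) ^ p - t ^ p) * (T / 2) ^ p := by
        refine integral_mono_on_of_le_Ioo hxT
          (intervalIntegrable_phiTwo_integrand hp1 hx (by linarith) (by linarith))
          ((intervalIntegrable_sub_rpow_sub_rpow hp1 x x (T / 2)).mul_const _) fun t ht => ?_
        have hgap : 0 ≤ (t - x) ^ p - t ^ p :=
          sub_nonneg.2 (rpow_le_rpow_of_nonpos (sub_pos.2 ht.1) (by linarith) hp0.le)
        exact mul_le_mul_of_nonneg_left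
          (rpow_le_rpow_of_nonpos (by linarith) (by linarith [ht.2]) hp0.le) hgap
    _ = (∫ t in x..T / 2, ((t - x) ^ p - t ^ p)) * (T / 2) ^ p := integral_mul_const _ _
    _ ≤ x ^ (p + 1) / (p + 1) * (T / 2) ^ p :=
        mul_le_mul_of_nonneg_right (integral_sub_rpow_sub_rpow_le hp1 hx.le hxT)
          (rpow_pos_of_pos (by linarith) p).le

lemma integral_phiTwo_integrand_right_le {p T x : ℝ} (hp1 : -1 < p) (hp0 : p < 0) (hx : 0 < x)
    (hxT : x ≤ T / 4) :
    ∫ t in T / 2..T, ((t - x) ^ p - t ^ p) * (T - t + x) ^ p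
      ≤ -4 * p / (p + 1) * x ^ (p + 1) * T ^ p := by
  have hT : 0 < T := by linarith
  have hp' : 0 < p + 1 := by linarith
  have hM : 0 ≤ -4 * p * x ^ (p + 1) / T :=
    div_nonneg (mul_nonneg (by linarith) (rpow_pos_of_pos hx _).le) hT.le
  calc ∫ t in T / 2..T, ((t - x) ^ p - t ^ p) * (T - t + x) ^ p
      ≤ ∫ t in T / 2..T, -4 * p * x ^ (p + 1) / T * (T - t + x) ^ p := by
        refine integral_mono_on (by linarith)
          (intervalIntegrable_phiTwo_integrand hp1 hx (by linarith) le_rfl)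
          (((continuousOn_rpow_sub_add p T x hx).mono fun _ ht => ?_).intervalIntegrable.const_mul
            _)
          fun t ht => ?_
        · exact ht.2.trans (max_le (by linarith) le_rfl)
        · have hgap := rpow_sub_rpow_add_le_of_le hp0 hx (a := t - x) (by linarith [ht.1])
          rw [sub_add_cancel] at hgap
          refine mul_le_mul_of_nonneg_right (hgap.trans ?_)
            (rpow_pos_of_pos (by linarith [ht.2]) p).le
          rw [div_le_div_iff₀ (by linarith [ht.1]) hT]
          nlinarith [mul_nonneg (mul_nonneg (neg_nonneg.2 hp0.le) (rpow_pos_of_pos hx (p + 1)).le)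
            (show 0 ≤ 4 * (t - x) - T by linarith [ht.1])]
    _ = -4 * p * x ^ (p + 1) / T * (((T + x - T / 2) ^ (p + 1) - x ^ (p + 1)) / (p + 1)) := by
        simp only [sub_add_eq_add_sub, intervalIntegral.integral_const_mul]
        rw [integral_comp_sub_left (fun u => u ^ p), add_sub_cancel_left,
          integral_rpow (Or.inl hp1)]
    _ ≤ -4 * p * x ^ (p + 1) / T * (T ^ (p + 1) / (p + 1)) := by
        gcongr
        have hmono : (T + x - T / 2) ^ (p + 1) ≤ T ^ (p + 1) :=
          rpow_le_rpow (by linarith) (by linarith) hp'.le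
        linarith [rpow_pos_of_pos hx (p + 1)]
    _ = -4 * p / (p + 1) * x ^ (p + 1) * T ^ p := by
        rw [rpow_add_one hT.ne']; field_simp

lemma phiTwo_le {p T x : ℝ} (hp1 : -1 < p) (hp0 : p < 0) (hx : 0 < x) (hxT : x ≤ T / 4) :
    phiTwo p T x ≤ (2 ^ (-p) - 4 * p) / (p + 1) * T ^ p * x ^ (p + 1) := by
  have hT : 0 < T := by linarith
  have hhalf : (T / 2) ^ p = 2 ^ (-p) * T ^ p := by
    rw [div_rpow hT.le zero_le_two, rpow_neg zero_le_two]; ring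
  have hleft := integral_phiTwo_integrand_left_le (T := T) hp1 hp0 hx (by linarith)
  rw [hhalf] at hleft
  rw [phiTwo, ← integral_add_adjacent_intervals (b := T / 2)
    (intervalIntegrable_phiTwo_integrand hp1 hx (by linarith) (by linarith))
    (intervalIntegrable_phiTwo_integrand hp1 hx (by linarith) le_rfl)]
  calc _ ≤ x ^ (p + 1) / (p + 1) * (2 ^ (-p) * T ^ p) + -4 * p / (p + 1) * x ^ (p + 1) * T ^ p :=
        add_le_add hleft (integral_phiTwo_integrand_right_le hp1 hp0 hx hxT)
    _ = _ := by ring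

lemma exp_neg_mul_phiTwo_le {p T x : ℝ} (hp1 : -1 < p) (hp0 : p < 0) (hx : 0 < x)
    (hxT : x ≤ T / 4) :
    exp (-x) * phiTwo p T x
      ≤ (2 ^ (-p) - 4 * p) / (p + 1) * T ^ p * (exp (-x) * x ^ (p + 1)) := by
  rw [mul_left_comm]
  exact mul_le_mul_of_nonneg_left (phiTwo_le hp1 hp0 hx hxT) (exp_pos _).le

lemma intervalIntegrable_exp_neg_mul_phiTwo {p T a : ℝ} (hp1 : -1 < p) (hp0 : p < 0)
    (ha : 0 ≤ a) (haT : a ≤ T / 4) :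
    IntervalIntegrable (fun x => exp (-x) * phiTwo p T x) volume 0 a := by
  have hmeas : StronglyMeasurable (phiTwo p T) :=
    stronglyMeasurable_intervalIntegral_param (by unfold Function.uncurry; fun_prop) T
  have hbound := ((continuous_exp_neg_mul_rpow (s := p + 1) (by linarith)).intervalIntegrable
    (μ := volume) 0 a).const_mul ((2 ^ (-p) - 4 * p) / (p + 1) * T ^ p)
  refine hbound.mono_fun'
    ((continuous_exp.comp continuous_neg).aestronglyMeasurable.mul hmeas.aestronglyMeasurable) ?_
  rw [uIoc_of_le ha]
  filter_upwards [self_mem_ae_restrict measurableSet_Ioc] with x hx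
  have hφ := phiTwo_pos hp1 hp0 hx.1 (by linarith [hx.1, hx.2])
  rw [norm_mul, norm_of_nonneg (exp_pos _).le, norm_of_nonneg hφ.le]
  exact exp_neg_mul_phiTwo_le hp1 hp0 hx.1 (hx.2.trans haT)

theorem stmt_12 (H ε : ℝ) (hH : H ∈ Set.Ioo (0:ℝ) (1/2)) (hε : ε ∈ Set.Ioo (0:ℝ) (1/4))
    (φ2 : ℝ → ℝ → ℝ)
    (hφ2 : ∀ T x : ℝ, φ2 T x =
      ∫ t in x..T, ((t - x) ^ (2 * H - 1) - t ^ (2 * H - 1)) * (T - t + x) ^ (2 * H - 1)) :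
    ∃ c : ℝ, 0 < c ∧ ∀ᶠ T : ℝ in atTop,
      0 < (∫ x in (0:ℝ)..(T * ε), Real.exp (-x) * φ2 T x) ∧
      (∫ x in (0:ℝ)..(T * ε), Real.exp (-x) * φ2 T x) ≤ c * T ^ (2 * H - 1) := by
  obtain ⟨hH0, hH2⟩ := hH
  obtain ⟨hε0, hε4⟩ := hε
  have hp1 : -1 < 2 * H - 1 := by linarith
  have hp0 : 2 * H - 1 < 0 := by linarith
  obtain rfl : φ2 = phiTwo (2 * H - 1) := funext fun T => funext (hφ2 T)
  set p := 2 * H - 1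
  set C := (2 ^ (-p) - 4 * p) / (p + 1)
  have hC : 0 < C := div_pos (by linarith [rpow_pos_of_pos two_pos (-p)]) (by linarith)
  refine ⟨C * Gamma (p + 1 + 1), mul_pos hC (Gamma_pos_of_pos (by linarith)), ?_⟩
  filter_upwards [eventually_gt_atTop 0] with T hT
  have ha : 0 < T * ε := mul_pos hT hε0
  have haT : T * ε ≤ T / 4 := by nlinarith
  have hint := intervalIntegrable_exp_neg_mul_phiTwo hp1 hp0 ha.le haT
  refine ⟨intervalIntegral_pos_of_pos_on hint (fun x hx => mul_pos (exp_pos _)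
    (phiTwo_pos hp1 hp0 hx.1 (by nlinarith [hx.2]))) ha, ?_⟩
  calc ∫ x in (0:ℝ)..T * ε, exp (-x) * phiTwo p T x
      ≤ ∫ x in (0:ℝ)..T * ε, C * T ^ p * (exp (-x) * x ^ (p + 1)) :=
        integral_mono_on_of_le_Ioo ha.le hint
          (((continuous_exp_neg_mul_rpow (by linarith)).intervalIntegrable _ _).const_mul _)
          fun x hx => exp_neg_mul_phiTwo_le hp1 hp0 hx.1 (hx.2.le.trans haT)
    _ = C * T ^ p * ∫ x in (0:ℝ)..T * ε, exp (-x) * x ^ (p + 1) :=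
        intervalIntegral.integral_const_mul _ _
    _ ≤ C * T ^ p * Gamma (p + 1 + 1) :=
        mul_le_mul_of_nonneg_left (integral_exp_neg_mul_rpow_le_Gamma_s12 (by linarith) ha.le)
          (mul_pos hC (rpow_pos_of_pos hT p)).le
    _ = C * Gamma (p + 1 + 1) * T ^ p := by ring
end

section
/- Let $H \in (0, 1/2)$ and for $T \in (0, \infty]$ define $L_1(T) := \int_{[0,T]^2} e^{-u-x} \Big( \int_x^{x+u} t^{2H-1} (x+u-t)^{2H-1} \, dt \Big) dx \, du$. Then $L_1(\infty) < \infty$ and there exists a constant $c > 0$ such that for all $T \geq 1$, $0 \leq L_1(\infty) - L_1(T) \leq c \, T e^{-T}$. -/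
/-!
Write `a = 2H - 1 ∈ (-1, 0)`. On `[x, x + u]` we have `t ^ a ≤ x ^ a`, so the inner integral is at
most `x ^ a u ^ (a + 1) / (a + 1)` and the integrand of `L₁` is dominated by the product
`e^{-x} x^a · e^{-u} u^{a+1} / (a + 1)` of two Gamma integrands. This gives integrability, and
`L₁(∞) - L₁(T)` is the integral over `(0, ∞)² \ (0, T]²`. For a product integrand that integral
is `(tail in x) · (full in u) + (partial in x) · (tail in u)`, and every tail
`∫_T^∞ e^{-x} x^s dx` with `s ≤ 1` is at most `∫_T^∞ e^{-x} x dx = (T + 1) e^{-T}`.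
-/

open MeasureTheory Real Filter Set Topology

theorem MeasureTheory.StronglyMeasurable.intervalIntegral_prod_right {α E : Type*}
    [MeasurableSpace α] [NormedAddCommGroup E] [NormedSpace ℝ E] {f : α → ℝ → E}
    (hf : StronglyMeasurable (Function.uncurry f)) {a b : α → ℝ} (ha : Measurable a)
    (hb : Measurable b) : StronglyMeasurable fun p => ∫ t in a p..b p, f p t := by
  have hIoc : ∀ {a b : α → ℝ}, Measurable a → Measurable b →
      StronglyMeasurable fun p => ∫ t in Ioc (a p) (b p), f p t := by
    intro a b ha hb
    have hs : MeasurableSet {q : α × ℝ | q.2 ∈ Ioc (a q.1) (b q.1)} :=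
      (_root_.measurableSet_lt (ha.comp measurable_fst) measurable_snd).inter
        (_root_.measurableSet_le measurable_snd (hb.comp measurable_fst))
    simp_rw [← integral_indicator measurableSet_Ioc]
    exact (hf.indicator hs).integral_prod_right'
  exact (hIoc ha hb).sub (hIoc hb ha)

theorem MeasureTheory.setIntegral_prod_mul_sdiff {α β L : Type*} [MeasurableSpace α]
    [MeasurableSpace β] [RCLike L] {μ : Measure α} {ν : Measure β} [SFinite μ] [SFinite ν]
    {f : α → L} {g : β → L} {s s' : Set α} {t t' : Set β} (hs : MeasurableSet s)
    (ht : MeasurableSet t) (hss' : s ⊆ s') (htt' : t ⊆ t') (hf : IntegrableOn f s' μ)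
    (hg : IntegrableOn g t' ν) :
    ∫ p in s' ×ˢ t' \ s ×ˢ t, f p.1 * g p.2 ∂μ.prod ν =
      (∫ x in s' \ s, f x ∂μ) * (∫ y in t', g y ∂ν) +
        (∫ x in s, f x ∂μ) * ∫ y in t' \ t, g y ∂ν := by
  have hfg : IntegrableOn (fun p : α × β => f p.1 * g p.2) (s' ×ˢ t') (μ.prod ν) := by
    rw [IntegrableOn, ← Measure.prod_restrict]
    exact hf.mul_prod hg
  rw [setIntegral_sdiff (hs.prod ht) hfg (prod_mono hss' htt'), setIntegral_prod_mul,
    setIntegral_prod_mul, setIntegral_sdiff hs hf hss', setIntegral_sdiff ht hg htt']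
  ring

section RpowConvolution

variable {a x u : ℝ}

theorem intervalIntegrable_rpow_sub (ha : -1 < a) :
    IntervalIntegrable (fun t => (x + u - t) ^ a) volume x (x + u) := by
  simpa using ((intervalIntegral.intervalIntegrable_rpow' (a := 0) (b := u) ha).comp_sub_left
    (x + u)).symm

theorem intervalIntegrable_rpow_mul_rpow_sub (ha : -1 < a) (hx : 0 < x) (hu : 0 ≤ u) :
    IntervalIntegrable (fun t => t ^ a * (x + u - t) ^ a) volume x (x + u) := by
  refine (intervalIntegrable_rpow_sub ha).continuousOn_mul fun t ht => ?_
  rw [uIcc_of_le (by linarith)] at ht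
  exact (continuousAt_id.rpow_const (Or.inl (by simp only [id]; linarith [ht.1]))).continuousWithinAt

theorem integral_rpow_mul_rpow_sub_nonneg (hx : 0 ≤ x) (hu : 0 ≤ u) :
    0 ≤ ∫ t in x..(x + u), t ^ a * (x + u - t) ^ a :=
  intervalIntegral.integral_nonneg (by linarith) fun t ht =>
    mul_nonneg (rpow_nonneg (hx.trans ht.1) _) (rpow_nonneg (by linarith [ht.2]) _)

theorem integral_rpow_mul_rpow_sub_le (ha : -1 < a) (ha' : a ≤ 0) (hx : 0 < x) (hu : 0 ≤ u) :
    ∫ t in x..(x + u), t ^ a * (x + u - t) ^ a ≤ x ^ a * (u ^ (a + 1) / (a + 1)) := by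
  have hsub : ∫ t in x..(x + u), (x + u - t) ^ a = u ^ (a + 1) / (a + 1) := by
    simp [intervalIntegral.integral_comp_sub_left (fun s => s ^ a), integral_rpow (Or.inl ha),
      zero_rpow (by linarith : a + 1 ≠ 0)]
  rw [← hsub, ← intervalIntegral.integral_const_mul]
  refine intervalIntegral.integral_mono_on (by linarith)
    (intervalIntegrable_rpow_mul_rpow_sub ha hx hu)
    ((intervalIntegrable_rpow_sub ha).const_mul _) fun t ht => ?_
  exact mul_le_mul_of_nonneg_right (rpow_le_rpow_of_nonpos hx ht.1 ha')
    (rpow_nonneg (by linarith [ht.2]) _)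

end RpowConvolution

section ExpRpow

variable {r s T : ℝ}

theorem integrableOn_exp_neg_mul_rpow_Ioi (hs : -1 < s) (hT : 0 ≤ T) :
    IntegrableOn (fun x => exp (-x) * x ^ s) (Ioi T) := by
  simpa using (GammaIntegral_convergent (s := s + 1) (by linarith)).mono_set (Ioi_subset_Ioi hT)

theorem integral_exp_neg_mul_rpow_Ioi_zero (hs : -1 < s) :
    ∫ x in Ioi 0, exp (-x) * x ^ s = Gamma (s + 1) := by
  simp [Gamma_eq_integral (by linarith : 0 < s + 1)]

theorem integral_exp_neg_mul_Ioi (hT : 0 ≤ T) :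
    ∫ x in Ioi T, exp (-x) * x = (T + 1) * exp (-T) := by
  have hderiv : ∀ x, HasDerivAt (fun x => -((x + 1) * exp (-x))) (exp (-x) * x) x := fun x => by
    refine (((hasDerivAt_id x).add_const 1).mul (hasDerivAt_neg x).exp).neg.congr_deriv ?_
    simp only [id]
    ring
  have hlim : Tendsto (fun x => -((x + 1) * exp (-x))) atTop (𝓝 0) := by
    simpa [add_mul] using ((tendsto_pow_mul_exp_neg_atTop_nhds_zero 1).add
      tendsto_exp_neg_atTop_nhds_zero).neg
  have hint : IntegrableOn (fun x => exp (-x) * x) (Ioi T) := by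
    simpa using integrableOn_exp_neg_mul_rpow_Ioi (s := 1) (by norm_num) hT
  rw [integral_Ioi_of_hasDerivAt_of_tendsto (hderiv T).continuousAt.continuousWithinAt
    (fun x _ => hderiv x) hint hlim]
  ring

theorem integral_exp_neg_mul_rpow_Ioi_le (hs : -1 < s) (hs' : s ≤ 1) (hT : 1 ≤ T) :
    ∫ x in Ioi T, exp (-x) * x ^ s ≤ (T + 1) * exp (-T) := by
  rw [← integral_exp_neg_mul_Ioi (by linarith)]
  refine setIntegral_mono_on (integrableOn_exp_neg_mul_rpow_Ioi hs (by linarith))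
    (by simpa using integrableOn_exp_neg_mul_rpow_Ioi (s := 1) (by norm_num) (by linarith : 0 ≤ T))
    measurableSet_Ioi fun x hx => ?_
  gcongr
  simpa using rpow_le_rpow_of_exponent_le (hT.trans (le_of_lt hx)) hs'

theorem setIntegral_exp_neg_mul_rpow_Ioc_le (hs : -1 < s) :
    ∫ x in Ioc 0 T, exp (-x) * x ^ s ≤ Gamma (s + 1) := by
  rw [← integral_exp_neg_mul_rpow_Ioi_zero hs]
  refine setIntegral_mono_set (integrableOn_exp_neg_mul_rpow_Ioi hs le_rfl) ?_
    Ioc_subset_Ioi_self.eventuallyLE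
  filter_upwards [ae_restrict_mem measurableSet_Ioi] with x hx
  exact mul_nonneg (exp_pos _).le (rpow_nonneg (le_of_lt hx) _)

theorem integrableOn_exp_neg_mul_rpow_prod (hr : -1 < r) (hs : -1 < s) :
    IntegrableOn (fun p : ℝ × ℝ => exp (-p.1) * p.1 ^ r * (exp (-p.2) * p.2 ^ s))
      (Ioi 0 ×ˢ Ioi 0) := by
  rw [IntegrableOn, Measure.volume_eq_prod, ← Measure.prod_restrict]
  exact (integrableOn_exp_neg_mul_rpow_Ioi hr le_rfl).mul_prod
    (integrableOn_exp_neg_mul_rpow_Ioi hs le_rfl)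

theorem setIntegral_exp_neg_mul_rpow_prod_sdiff_le (hr : -1 < r) (hr' : r ≤ 1) (hs : -1 < s)
    (hs' : s ≤ 1) (hT : 1 ≤ T) :
    ∫ p in Ioi 0 ×ˢ Ioi 0 \ Ioc 0 T ×ˢ Ioc 0 T, exp (-p.1) * p.1 ^ r * (exp (-p.2) * p.2 ^ s)
      ≤ (Gamma (r + 1) + Gamma (s + 1)) * (T + 1) * exp (-T) := by
  rw [Measure.volume_eq_prod, setIntegral_prod_mul_sdiff measurableSet_Ioc measurableSet_Ioc
    Ioc_subset_Ioi_self Ioc_subset_Ioi_self (integrableOn_exp_neg_mul_rpow_Ioi hr le_rfl)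
    (integrableOn_exp_neg_mul_rpow_Ioi hs le_rfl), Ioi_sdiff_Ioc, max_eq_right (by linarith),
    integral_exp_neg_mul_rpow_Ioi_zero hs]
  have hΓs : 0 < Gamma (s + 1) := Gamma_pos_of_pos (by linarith)
  have hΓr : 0 < Gamma (r + 1) := Gamma_pos_of_pos (by linarith)
  have htail_s : 0 ≤ ∫ y in Ioi T, exp (-y) * y ^ s :=
    setIntegral_nonneg measurableSet_Ioi fun y hy =>
      mul_nonneg (exp_pos _).le (rpow_nonneg (by linarith [mem_Ioi.mp hy]) _)
  calc (∫ x in Ioi T, exp (-x) * x ^ r) * Gamma (s + 1)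
        + (∫ x in Ioc 0 T, exp (-x) * x ^ r) * ∫ y in Ioi T, exp (-y) * y ^ s
      ≤ (T + 1) * exp (-T) * Gamma (s + 1) + Gamma (r + 1) * ((T + 1) * exp (-T)) := by
        gcongr
        · exact integral_exp_neg_mul_rpow_Ioi_le hr hr' hT
        · exact setIntegral_exp_neg_mul_rpow_Ioc_le hr
        · exact integral_exp_neg_mul_rpow_Ioi_le hs hs' hT
    _ = (Gamma (r + 1) + Gamma (s + 1)) * (T + 1) * exp (-T) := by ring

end ExpRpow

/-- The integrand of the paper's `L₁` at `p = (x, u)`, with `a = 2H - 1`. -/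
noncomputable def l1Integrand (a : ℝ) (p : ℝ × ℝ) : ℝ :=
  exp (-p.2 - p.1) * ∫ t in p.1..(p.1 + p.2), t ^ a * (p.1 + p.2 - t) ^ a

section L1Integrand

variable {a : ℝ} {p : ℝ × ℝ}

theorem measurable_l1Integrand (a : ℝ) : Measurable (l1Integrand a) := by
  refine (by fun_prop : Measurable fun p : ℝ × ℝ => exp (-p.2 - p.1)).mul ?_
  have hf : StronglyMeasurable fun q : (ℝ × ℝ) × ℝ => q.2 ^ a * (q.1.1 + q.1.2 - q.2) ^ a :=
    Measurable.stronglyMeasurable (by fun_prop)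
  exact (hf.intervalIntegral_prod_right measurable_fst
    (measurable_fst.add measurable_snd)).measurable

theorem l1Integrand_nonneg (hp : p ∈ Ioi 0 ×ˢ Ioi 0) : 0 ≤ l1Integrand a p :=
  mul_nonneg (exp_pos _).le (integral_rpow_mul_rpow_sub_nonneg (le_of_lt hp.1) (le_of_lt hp.2))

theorem l1Integrand_le (ha : -1 < a) (ha' : a ≤ 0) (hp : p ∈ Ioi 0 ×ˢ Ioi 0) :
    l1Integrand a p ≤ (a + 1)⁻¹ * (exp (-p.1) * p.1 ^ a * (exp (-p.2) * p.2 ^ (a + 1))) := by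
  obtain ⟨hx, hu⟩ : 0 < p.1 ∧ 0 < p.2 := hp
  calc l1Integrand a p ≤ exp (-p.2 - p.1) * (p.1 ^ a * (p.2 ^ (a + 1) / (a + 1))) :=
        mul_le_mul_of_nonneg_left (integral_rpow_mul_rpow_sub_le ha ha' hx hu.le) (exp_pos _).le
    _ = _ := by rw [sub_eq_add_neg, exp_add]; ring

theorem integrableOn_l1Integrand (ha : -1 < a) (ha' : a ≤ 0) :
    IntegrableOn (l1Integrand a) (Ioi 0 ×ˢ Ioi 0) := by
  refine ((integrableOn_exp_neg_mul_rpow_prod (s := a + 1) ha (by linarith)).const_mul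
    (a + 1)⁻¹).mono' (measurable_l1Integrand a).aestronglyMeasurable ?_
  filter_upwards [ae_restrict_mem (measurableSet_Ioi.prod measurableSet_Ioi)] with p hp
  rw [norm_of_nonneg (l1Integrand_nonneg hp)]
  exact l1Integrand_le ha ha' hp

theorem exists_setIntegral_l1Integrand_sdiff_le (ha : -1 < a) (ha' : a ≤ 0) :
    ∃ c > 0, ∀ T ≥ 1,
      ∫ p in Ioi 0 ×ˢ Ioi 0 \ Ioc 0 T ×ˢ Ioc 0 T, l1Integrand a p ≤ c * T * exp (-T) := by
  have ha1 : 0 < a + 1 := by linarith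
  have hΓ₁ := Gamma_pos_of_pos ha1
  have hΓ₂ := Gamma_pos_of_pos (by linarith : 0 < a + 2)
  refine ⟨2 * (Gamma (a + 1) + Gamma (a + 2)) / (a + 1), by positivity, fun T hT => ?_⟩
  have hD : MeasurableSet (Ioi (0 : ℝ) ×ˢ Ioi (0 : ℝ) \ Ioc 0 T ×ˢ Ioc 0 T) :=
    (measurableSet_Ioi.prod measurableSet_Ioi).diff (measurableSet_Ioc.prod measurableSet_Ioc)
  have hmajorant : IntegrableOn
      (fun p : ℝ × ℝ => (a + 1)⁻¹ * (exp (-p.1) * p.1 ^ a * (exp (-p.2) * p.2 ^ (a + 1))))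
      (Ioi 0 ×ˢ Ioi 0) :=
    (integrableOn_exp_neg_mul_rpow_prod ha (by linarith)).const_mul _
  have htail := setIntegral_exp_neg_mul_rpow_prod_sdiff_le ha (by linarith) (s := a + 1)
    (by linarith) (by linarith) hT
  rw [add_assoc a 1 1, one_add_one_eq_two] at htail
  calc ∫ p in Ioi 0 ×ˢ Ioi 0 \ Ioc 0 T ×ˢ Ioc 0 T, l1Integrand a p
      ≤ ∫ p in Ioi 0 ×ˢ Ioi 0 \ Ioc 0 T ×ˢ Ioc 0 T,
          (a + 1)⁻¹ * (exp (-p.1) * p.1 ^ a * (exp (-p.2) * p.2 ^ (a + 1))) :=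
        setIntegral_mono_on ((integrableOn_l1Integrand ha ha').mono_set sdiff_subset)
          (hmajorant.mono_set sdiff_subset) hD fun p hp => l1Integrand_le ha ha' hp.1
    _ ≤ (a + 1)⁻¹ * ((Gamma (a + 1) + Gamma (a + 2)) * (T + 1) * exp (-T)) := by
        rw [integral_const_mul]
        gcongr
    _ ≤ (a + 1)⁻¹ * ((Gamma (a + 1) + Gamma (a + 2)) * (2 * T) * exp (-T)) := by
        gcongr
        linarith
    _ = 2 * (Gamma (a + 1) + Gamma (a + 2)) / (a + 1) * T * exp (-T) := by ring

end L1Integrand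

theorem stmt_15 (H : ℝ) (hH : H ∈ Set.Ioo (0:ℝ) (1/2))
    (L1 : ℝ → ℝ) (L1inf : ℝ)
    (hL1 : ∀ T : ℝ, L1 T = ∫ x in (0:ℝ)..T, ∫ u in (0:ℝ)..T,
      Real.exp (-u - x) * ∫ t in x..(x + u), t ^ (2 * H - 1) * (x + u - t) ^ (2 * H - 1))
    (hL1inf : L1inf = ∫ p in Set.Ioi (0:ℝ) ×ˢ Set.Ioi (0:ℝ),
      Real.exp (-p.2 - p.1) * ∫ t in p.1..(p.1 + p.2),
        t ^ (2 * H - 1) * (p.1 + p.2 - t) ^ (2 * H - 1)) :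
    MeasureTheory.IntegrableOn (fun p : ℝ × ℝ =>
        Real.exp (-p.2 - p.1) * ∫ t in p.1..(p.1 + p.2),
          t ^ (2 * H - 1) * (p.1 + p.2 - t) ^ (2 * H - 1))
        (Set.Ioi (0:ℝ) ×ˢ Set.Ioi (0:ℝ)) ∧
    ∃ c : ℝ, 0 < c ∧ ∀ T : ℝ, 1 ≤ T →
      0 ≤ L1inf - L1 T ∧ L1inf - L1 T ≤ c * T * Real.exp (-T) := by
  obtain ⟨hH0, hH1⟩ := hH
  have ha : -1 < 2 * H - 1 := by linarith
  have ha' : 2 * H - 1 ≤ 0 := by linarith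
  have hint := integrableOn_l1Integrand ha ha'
  obtain ⟨c, hc, htail⟩ := exists_setIntegral_l1Integrand_sdiff_le ha ha'
  refine ⟨hint, c, hc, fun T hT => ?_⟩
  have hB : Ioc 0 T ×ˢ Ioc 0 T ⊆ Ioi (0 : ℝ) ×ˢ Ioi (0 : ℝ) :=
    prod_mono Ioc_subset_Ioi_self Ioc_subset_Ioi_self
  have hL1T : L1 T = ∫ p in Ioc 0 T ×ˢ Ioc 0 T, l1Integrand (2 * H - 1) p := by
    rw [hL1 T, Measure.volume_eq_prod, setIntegral_prod _
      (by rw [← Measure.volume_eq_prod]; exact hint.mono_set hB)]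
    simp only [intervalIntegral.integral_of_le (by linarith : (0 : ℝ) ≤ T), l1Integrand]
  have hdiff : L1inf - L1 T =
      ∫ p in Ioi 0 ×ˢ Ioi 0 \ Ioc 0 T ×ˢ Ioc 0 T, l1Integrand (2 * H - 1) p := by
    rw [hL1inf, hL1T, setIntegral_sdiff (measurableSet_Ioc.prod measurableSet_Ioc) hint hB]
    rfl
  rw [hdiff]
  exact ⟨setIntegral_nonneg ((measurableSet_Ioi.prod measurableSet_Ioi).diff
    (measurableSet_Ioc.prod measurableSet_Ioc)) fun p hp => l1Integrand_nonneg hp.1, htail T hT⟩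
end
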